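/- Let α, β, δ > 0 with δ < α, and η ∈ (0,1) sufficiently close to 1 (depending on n, α, β, δ). For any measurable F ⊆ R^n and any nonnegative measurable H on R^{n+1}_+: ∬_{R_γ^{α,β}(F̃_β^{[η]})} H(y,t) dγ(y) dt/t ≤ C ∫_F (∬_{Γ_γ^{δ,β}(x)} H(y,t)/γ(B(y, min(δt, m_β(y)))) dγ(y) dt/t) dγ(x), where C depends only on n, α, β, δ, η, and F̃_β^{[η]} = {x ∈ R^n : γ(B ∩ F) ≥ η·γ(B) for every β-admissible ball B containing x}. -/

import Mathlib

open MeasureTheory Metric Set ENNReal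

noncomputable def mCut {n : ℕ} (x : EuclideanSpace ℝ (Fin n)) : ℝ :=
  if ‖x‖ ≤ 1 then 1 else 1 / ‖x‖

noncomputable def gaussM (n : ℕ) : Measure (EuclideanSpace ℝ (Fin n)) :=
  volume.withDensity fun y => ENNReal.ofReal (Real.exp (-‖y‖ ^ 2))

noncomputable def dtt : Measure ℝ :=
  (volume.restrict (Set.Ioi (0 : ℝ))).withDensity fun t => ENNReal.ofReal (1 / t)

noncomputable def tentMeasure (n : ℕ) : Measure (EuclideanSpace ℝ (Fin n) × ℝ) :=
  (gaussM n).prod dtt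

def gaussCone {n : ℕ} (α β : ℝ) (x : EuclideanSpace ℝ (Fin n)) :
    Set (EuclideanSpace ℝ (Fin n) × ℝ) :=
  {p | 0 < p.2 ∧ dist p.1 x < min (α * p.2) (β * mCut p.1)}

def gaussTent {n : ℕ} (α β : ℝ) (B : Set (EuclideanSpace ℝ (Fin n))) :
    Set (EuclideanSpace ℝ (Fin n) × ℝ) :=
  {p | 0 < p.2 ∧ min (α * p.2) (β * mCut p.1) ≤ Metric.infDist p.1 Bᶜ}

noncomputable def areaS {n : ℕ} (q α β : ℝ) (f : EuclideanSpace ℝ (Fin n) × ℝ → ℝ)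
    (x : EuclideanSpace ℝ (Fin n)) : ℝ≥0∞ :=
  (∫⁻ p in gaussCone α β x,
      ENNReal.ofReal (|f p| ^ q) /
        gaussM n (Metric.ball p.1 (min (α * p.2) (β * mCut p.1))) ∂ tentMeasure n) ^ (1 / q)

noncomputable def areaSInf {n : ℕ} (α β : ℝ) (f : EuclideanSpace ℝ (Fin n) × ℝ → ℝ)
    (x : EuclideanSpace ℝ (Fin n)) : ℝ≥0∞ :=
  ⨆ p ∈ gaussCone α β x, ENNReal.ofReal |f p|

lemma mCut_eq {n : ℕ} (x : EuclideanSpace ℝ (Fin n)) : mCut x = 1 / max 1 ‖x‖ := by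
  unfold mCut
  rcases le_or_gt ‖x‖ 1 with h | h
  · rw [if_pos h, max_eq_left h, div_one]
  · rw [if_neg (not_le.mpr h), max_eq_right h.le]

lemma continuous_mCut {n : ℕ} : Continuous (mCut (n := n)) := by
  simp only [funext mCut_eq]
  exact continuous_const.div (continuous_const.max (continuous_norm)) (fun x => by positivity)

lemma mCut_pos {n : ℕ} (x : EuclideanSpace ℝ (Fin n)) : 0 < mCut x := by
  rw [mCut_eq]; positivity

lemma mCut_le_one {n : ℕ} (x : EuclideanSpace ℝ (Fin n)) : mCut x ≤ 1 := by
  rw [mCut_eq]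
  rw [div_le_one (by positivity)]
  exact le_max_left _ _

lemma norm_mul_mCut_le {n : ℕ} (x : EuclideanSpace ℝ (Fin n)) : ‖x‖ * mCut x ≤ 1 := by
  rw [mCut_eq, mul_one_div, div_le_one (by positivity)]
  exact le_max_right _ _

lemma gaussM_apply {n : ℕ} {s : Set (EuclideanSpace ℝ (Fin n))} (hs : MeasurableSet s) :
    gaussM n s = ∫⁻ y in s, ENNReal.ofReal (Real.exp (-‖y‖ ^ 2)) ∂volume :=
  withDensity_apply _ hs

lemma gaussM_le_volume {n : ℕ} {s : Set (EuclideanSpace ℝ (Fin n))} (hs : MeasurableSet s) :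
    gaussM n s ≤ volume s := by
  rw [gaussM_apply hs]
  calc ∫⁻ y in s, ENNReal.ofReal (Real.exp (-‖y‖ ^ 2)) ∂volume
      ≤ ∫⁻ _ in s, 1 ∂volume := by
        refine setLIntegral_mono measurable_const fun y _ => ?_
        simpa using ENNReal.ofReal_le_one.mpr (Real.exp_le_one_iff.mpr (by positivity))
    _ = volume s := by simp

lemma gaussM_ball_ne_top {n : ℕ} (y : EuclideanSpace ℝ (Fin n)) (r : ℝ) :
    gaussM n (ball y r) ≠ ∞ :=
  ((gaussM_le_volume measurableSet_ball).trans_lt measure_ball_lt_top).ne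

-- squeeze on the norm for points of an admissible ball
lemma norm_sq_bound {n : ℕ} {β : ℝ} (hβ : 0 < β) {y z : EuclideanSpace ℝ (Fin n)} {r : ℝ}
    (hr : 0 < r) (hrm : r ≤ β * mCut y) (hz : z ∈ ball y r) :
    |‖z‖ ^ 2 - ‖y‖ ^ 2| ≤ 2 * β + 3 * β ^ 2 := by
  have hd : dist z y < r := mem_ball.mp hz
  have h1 : ‖z‖ ≤ ‖y‖ + r := by
    have := norm_sub_norm_le z y
    rw [← dist_eq_norm] at this
    linarith
  have h2 : ‖y‖ ≤ ‖z‖ + r := by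
    have := norm_sub_norm_le y z
    rw [← dist_eq_norm, dist_comm] at this
    linarith
  have hyr : ‖y‖ * r ≤ β := by
    calc ‖y‖ * r ≤ ‖y‖ * (β * mCut y) := by
          exact mul_le_mul_of_nonneg_left hrm (norm_nonneg _)
      _ = β * (‖y‖ * mCut y) := by ring
      _ ≤ β * 1 := mul_le_mul_of_nonneg_left (norm_mul_mCut_le y) hβ.le
      _ = β := mul_one β
  have hrβ : r ≤ β := hrm.trans (by nlinarith [mCut_le_one y, mCut_pos y])
  have hz0 : 0 ≤ ‖z‖ := norm_nonneg _
  have hy0 : 0 ≤ ‖y‖ := norm_nonneg _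
  rw [abs_le]
  constructor
  · nlinarith
  · nlinarith

lemma gaussM_ball_le {n : ℕ} {β : ℝ} (hβ : 0 < β) {y : EuclideanSpace ℝ (Fin n)} {r : ℝ}
    (hr : 0 < r) (hrm : r ≤ β * mCut y) :
    gaussM n (ball y r)
      ≤ ENNReal.ofReal (Real.exp (-‖y‖ ^ 2 + (2 * β + 3 * β ^ 2))) * volume (ball y r) := by
  rw [gaussM_apply measurableSet_ball]
  calc ∫⁻ z in ball y r, ENNReal.ofReal (Real.exp (-‖z‖ ^ 2)) ∂volume
      ≤ ∫⁻ _ in ball y r, ENNReal.ofReal (Real.exp (-‖y‖ ^ 2 + (2 * β + 3 * β ^ 2))) ∂volume := by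
        refine setLIntegral_mono measurable_const fun z hz => ?_
        refine ENNReal.ofReal_le_ofReal (Real.exp_le_exp.mpr ?_)
        have := abs_le.mp (norm_sq_bound hβ hr hrm hz)
        linarith [this.1]
    _ = _ := by rw [setLIntegral_const]

lemma le_gaussM_ball {n : ℕ} {β : ℝ} (hβ : 0 < β) {y : EuclideanSpace ℝ (Fin n)} {r : ℝ}
    (hr : 0 < r) (hrm : r ≤ β * mCut y) :
    ENNReal.ofReal (Real.exp (-‖y‖ ^ 2 - (2 * β + 3 * β ^ 2))) * volume (ball y r)
      ≤ gaussM n (ball y r) := by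
  rw [gaussM_apply measurableSet_ball, ← setLIntegral_const]
  refine setLIntegral_mono (by fun_prop) fun z hz => ?_
  refine ENNReal.ofReal_le_ofReal (Real.exp_le_exp.mpr ?_)
  have := abs_le.mp (norm_sq_bound hβ hr hrm hz)
  linarith [this.2]

lemma volume_ball_ratio {n : ℕ} {y : EuclideanSpace ℝ (Fin n)} {r R lam : ℝ}
    (hr : 0 < r) (hrR : r ≤ R) (hRl : R ≤ lam * r) :
    volume (ball y R) ≤ ENNReal.ofReal (lam ^ n) * volume (ball y r) := by
  have hR : 0 < R := hr.trans_le hrR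
  have hlam : 1 ≤ lam := by nlinarith
  cases n with
  | zero =>
      have : ball y R = ball y r := by
        have : Subsingleton (EuclideanSpace ℝ (Fin 0)) := by
          infer_instance
        ext z
        simp [mem_ball, Subsingleton.elim z y, hr, hR]
      simp [this]
  | succ m =>
      have : Nontrivial (EuclideanSpace ℝ (Fin (m + 1))) := by infer_instance
      rw [Measure.addHaar_ball _ _ hR.le, Measure.addHaar_ball _ _ hr.le,
        finrank_euclideanSpace_fin, ← mul_assoc, ← ENNReal.ofReal_mul (by positivity)]
      refine mul_le_mul_left (ENNReal.ofReal_le_ofReal ?_) _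
      calc R ^ (m + 1) ≤ (lam * r) ^ (m + 1) := pow_le_pow_left₀ hR.le hRl _
        _ = lam ^ (m + 1) * r ^ (m + 1) := mul_pow _ _ _

noncomputable def Kc (n : ℕ) (α β δ : ℝ) : ℝ :=
  Real.exp (2 * (2 * β + 3 * β ^ 2)) * (α / δ) ^ n

lemma one_le_Kc {n : ℕ} {α β δ : ℝ} (hβ : 0 < β) (hδ : 0 < δ) (hδα : δ < α) :
    1 ≤ Kc n α β δ := by
  have h1 : (1:ℝ) ≤ Real.exp (2 * (2 * β + 3 * β ^ 2)) := by
    rw [Real.one_le_exp_iff]; nlinarith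
  have h2 : (1:ℝ) ≤ (α / δ) ^ n := one_le_pow₀ (by rw [le_div_iff₀ hδ]; linarith)
  unfold Kc
  nlinarith

lemma gaussM_ball_ratio {n : ℕ} {α β δ : ℝ} (hβ : 0 < β) (hδ : 0 < δ) (hδα : δ < α)
    {y : EuclideanSpace ℝ (Fin n)} {r R : ℝ} (hr : 0 < r) (hrR : r ≤ R)
    (hRm : R ≤ β * mCut y) (hRl : R ≤ (α / δ) * r) :
    gaussM n (ball y R) ≤ ENNReal.ofReal (Kc n α β δ) * gaussM n (ball y r) := by
  have hrm : r ≤ β * mCut y := hrR.trans hRm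
  have hR : 0 < R := hr.trans_le hrR
  set c := 2 * β + 3 * β ^ 2 with hc
  calc gaussM n (ball y R)
      ≤ ENNReal.ofReal (Real.exp (-‖y‖ ^ 2 + c)) * volume (ball y R) :=
        gaussM_ball_le hβ hR hRm
    _ ≤ ENNReal.ofReal (Real.exp (-‖y‖ ^ 2 + c)) *
          (ENNReal.ofReal ((α / δ) ^ n) * volume (ball y r)) :=
        mul_le_mul_right (volume_ball_ratio hr hrR hRl) _
    _ = ENNReal.ofReal (Kc n α β δ) *
          (ENNReal.ofReal (Real.exp (-‖y‖ ^ 2 - c)) * volume (ball y r)) := by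
        have hK0 : (0:ℝ) ≤ Kc n α β δ := by unfold Kc; exact mul_nonneg (Real.exp_nonneg _) (pow_nonneg (div_nonneg (by linarith) hδ.le) n)
        have he : Real.exp (-‖y‖ ^ 2 + c) = Real.exp (2 * c) * Real.exp (-‖y‖ ^ 2 - c) := by
          rw [← Real.exp_add]; congr 1; ring
        have hreal : Real.exp (-‖y‖ ^ 2 + c) * (α / δ) ^ n
            = Kc n α β δ * Real.exp (-‖y‖ ^ 2 - c) := by
          rw [Kc, he, hc]; ring
        rw [← mul_assoc, ← mul_assoc, ← ENNReal.ofReal_mul (Real.exp_nonneg _),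
          ← ENNReal.ofReal_mul hK0, hreal]
    _ ≤ ENNReal.ofReal (Kc n α β δ) * gaussM n (ball y r) :=
        mul_le_mul_right (le_gaussM_ball hβ hr hrm) _

lemma key_density {n : ℕ} {α β δ : ℝ} (hα : 0 < α) (hβ : 0 < β) (hδ : 0 < δ) (hδα : δ < α)
    {η : ℝ} (hη : 1 - 1 / (2 * Kc n α β δ) ≤ η) (hη1 : η < 1)
    {F : Set (EuclideanSpace ℝ (Fin n))}
    {x y : EuclideanSpace ℝ (Fin n)} {t : ℝ} (ht : 0 < t)
    (hx : ∀ c : EuclideanSpace ℝ (Fin n), ∀ r : ℝ, 0 < r → r ≤ β * mCut c →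
        x ∈ ball c r →
        ENNReal.ofReal η * gaussM n (ball c r) ≤ gaussM n (ball c r ∩ F))
    (hd : dist y x < min (α * t) (β * mCut y)) :
    gaussM n (ball y (min (δ * t) (β * mCut y)))
      ≤ 2 * gaussM n (F ∩ ball y (min (δ * t) (β * mCut y))) := by
  have hK1 : 1 ≤ Kc n α β δ := one_le_Kc hβ hδ hδα
  have hK0 : 0 < Kc n α β δ := by linarith
  have hη0 : 0 ≤ η := by
    have : 1 / (2 * Kc n α β δ) ≤ 1 / 2 := by
      apply one_div_le_one_div_of_le <;> linarith
    linarith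
  set m := β * mCut y with hm
  have hm0 : 0 < m := mul_pos hβ (mCut_pos y)
  set r := min (δ * t) m with hrdef
  set R := min (α * t) m with hRdef
  have hr0 : 0 < r := lt_min (by positivity) hm0
  have hR0 : 0 < R := lt_min (by positivity) hm0
  have hrR : r ≤ R := min_le_min (by nlinarith) le_rfl
  have hRm : R ≤ m := min_le_right _ _
  have hRl : R ≤ (α / δ) * r := by
    rcases le_or_gt (δ * t) m with h | h
    · rw [hrdef, min_eq_left h]
      calc R ≤ α * t := min_le_left _ _
        _ = (α / δ) * (δ * t) := by field_simp
    · rw [hrdef, min_eq_right h.le]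
      have h1 : (1:ℝ) ≤ α / δ := by rw [le_div_iff₀ hδ]; linarith
      nlinarith
  have h1 : ENNReal.ofReal η * gaussM n (ball y R) ≤ gaussM n (ball y R ∩ F) :=
    hx y R hR0 hRm (mem_ball.mpr (by rw [dist_comm]; exact hd))
  set a := gaussM n (ball y r) with ha
  set A := gaussM n (ball y R) with hA
  have haA : a ≤ A := measure_mono (ball_subset_ball hrR)
  have haT : a ≠ ∞ := gaussM_ball_ne_top y r
  have hAT : A ≠ ∞ := gaussM_ball_ne_top y R
  set b := gaussM n (ball y r ∩ F) with hb
  have h2 : gaussM n (ball y R ∩ F) ≤ b + (A - a) := by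
    have hsub : ball y R ∩ F ⊆ (ball y r ∩ F) ∪ (ball y R \ ball y r) := by
      intro z hz
      rcases lt_or_ge (dist z y) r with h | h
      · exact Or.inl ⟨mem_ball.mpr h, hz.2⟩
      · exact Or.inr ⟨hz.1, fun hc => absurd (mem_ball.mp hc) (not_lt.mpr h)⟩
    calc gaussM n (ball y R ∩ F) ≤ gaussM n ((ball y r ∩ F) ∪ (ball y R \ ball y r)) :=
          measure_mono hsub
      _ ≤ b + gaussM n (ball y R \ ball y r) := measure_union_le _ _
      _ = b + (A - a) := by
          rw [measure_diff (ball_subset_ball hrR) measurableSet_ball.nullMeasurableSet haT]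
  have hK : A ≤ ENNReal.ofReal (Kc n α β δ) * a := gaussM_ball_ratio hβ hδ hδα hr0 hrR hRm hRl
  -- a + ofReal η * A ≤ b + A
  have h3 : a + ENNReal.ofReal η * A ≤ b + A := by
    calc a + ENNReal.ofReal η * A ≤ a + (b + (A - a)) := add_le_add_right (h1.trans h2) a
      _ = b + (a + (A - a)) := by ring
      _ = b + A := by rw [add_tsub_cancel_of_le haA]
  have hsplit : A = ENNReal.ofReal η * A + ENNReal.ofReal (1 - η) * A := by
    rw [← add_mul, ← ENNReal.ofReal_add hη0 (by linarith), add_sub_cancel,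
      ENNReal.ofReal_one, one_mul]
  have h4 : a ≤ b + ENNReal.ofReal (1 - η) * A := by
    have h3' : a + ENNReal.ofReal η * A
        ≤ (b + ENNReal.ofReal (1 - η) * A) + ENNReal.ofReal η * A := by
      calc a + ENNReal.ofReal η * A ≤ b + A := h3
        _ = b + (ENNReal.ofReal η * A + ENNReal.ofReal (1 - η) * A) := by rw [← hsplit]
        _ = (b + ENNReal.ofReal (1 - η) * A) + ENNReal.ofReal η * A := by ring
    exact (ENNReal.add_le_add_iff_right (ENNReal.mul_ne_top ENNReal.ofReal_ne_top hAT)).mp h3'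
  have h5 : ENNReal.ofReal (1 - η) * A ≤ ENNReal.ofReal (1 / 2) * a := by
    calc ENNReal.ofReal (1 - η) * A
        ≤ ENNReal.ofReal (1 - η) * (ENNReal.ofReal (Kc n α β δ) * a) :=
          mul_le_mul_right hK _
      _ = ENNReal.ofReal ((1 - η) * Kc n α β δ) * a := by
          rw [← mul_assoc, ← ENNReal.ofReal_mul (by linarith)]
      _ ≤ ENNReal.ofReal (1 / 2) * a := by
          refine mul_le_mul_left (ENNReal.ofReal_le_ofReal ?_) a
          have h6 : 1 - η ≤ 1 / (2 * Kc n α β δ) := by linarith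
          calc (1 - η) * Kc n α β δ ≤ (1 / (2 * Kc n α β δ)) * Kc n α β δ :=
                mul_le_mul_of_nonneg_right h6 hK0.le
            _ = 1 / 2 := by field_simp
  have hhalf : ENNReal.ofReal (1 / 2) * a = a / 2 := by
    rw [ENNReal.ofReal_div_of_pos (by norm_num), ENNReal.ofReal_one, ENNReal.ofReal_ofNat,
      one_div, ← ENNReal.div_eq_inv_mul]
  have h7 : a ≤ b + a / 2 := by
    calc a ≤ b + ENNReal.ofReal (1 - η) * A := h4
      _ ≤ b + ENNReal.ofReal (1 / 2) * a := add_le_add_right h5 b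
      _ = b + a / 2 := by rw [hhalf]
  have h8 : a / 2 ≤ b := by
    have h := tsub_le_tsub_right h7 (a / 2)
    rwa [ENNReal.sub_half haT, ENNReal.add_sub_cancel_right
      (by simp [ENNReal.div_eq_top, haT])] at h
  calc a ≤ 2 * (a / 2) := by rw [ENNReal.mul_div_cancel (by norm_num) (by norm_num)]
    _ ≤ 2 * b := mul_le_mul_right h8 2
    _ = 2 * gaussM n (F ∩ ball y r) := by rw [hb, inter_comm]


section Main

variable {n : ℕ}

local notation "E" => EuclideanSpace ℝ (Fin n)

lemma isOpen_gaussCone (a b : ℝ) (x : E) : IsOpen (gaussCone a b x) := by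
  have h1 : IsOpen {p : E × ℝ | 0 < p.2} := isOpen_lt continuous_const continuous_snd
  have h2 : IsOpen {p : E × ℝ | dist p.1 x < min (a * p.2) (b * mCut p.1)} :=
    isOpen_lt (continuous_fst.dist continuous_const)
      ((continuous_const.mul continuous_snd).min
        (continuous_const.mul (continuous_mCut.comp continuous_fst)))
  exact h1.inter h2

lemma isOpen_coneProd (a b : ℝ) :
    IsOpen {q : E × (E × ℝ) | q.2 ∈ gaussCone a b q.1} := by
  have h1 : IsOpen {q : E × (E × ℝ) | 0 < q.2.2} :=
    isOpen_lt continuous_const (continuous_snd.comp continuous_snd)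
  have h2 : IsOpen {q : E × (E × ℝ) |
      dist q.2.1 q.1 < min (a * q.2.2) (b * mCut q.2.1)} :=
    isOpen_lt ((continuous_fst.comp continuous_snd).dist continuous_fst)
      ((continuous_const.mul (continuous_snd.comp continuous_snd)).min
        (continuous_const.mul (continuous_mCut.comp (continuous_fst.comp continuous_snd))))
  exact h1.inter h2

instance : SFinite (gaussM n) := by unfold gaussM; infer_instance

instance : SFinite dtt := by unfold dtt; infer_instance

instance : SFinite (tentMeasure n) := by unfold tentMeasure; infer_instance

lemma measurable_gaussM_ball (δ β : ℝ) :
    Measurable fun p : E × ℝ => gaussM n (ball p.1 (min (δ * p.2) (β * mCut p.1))) := by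
  have hS : MeasurableSet {q : (E × ℝ) × E |
      dist q.2 q.1.1 < min (δ * q.1.2) (β * mCut q.1.1)} :=
    (isOpen_lt (continuous_snd.dist (continuous_fst.comp continuous_fst))
      ((continuous_const.mul (continuous_snd.comp continuous_fst)).min
        (continuous_const.mul (continuous_mCut.comp (continuous_fst.comp continuous_fst))))).measurableSet
  have h := measurable_measure_prodMk_left (ν := gaussM n) hS
  have heq : ∀ p : E × ℝ, (Prod.mk p ⁻¹' {q : (E × ℝ) × E |
      dist q.2 q.1.1 < min (δ * q.1.2) (β * mCut q.1.1)})
      = ball p.1 (min (δ * p.2) (β * mCut p.1)) := by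
    intro p; rfl
  simp only [heq] at h
  exact h

lemma measurable_gaussM_inter_ball (δ β : ℝ) {F : Set E} (hF : MeasurableSet F) :
    Measurable fun p : E × ℝ => gaussM n (F ∩ ball p.1 (min (δ * p.2) (β * mCut p.1))) := by
  have hS : MeasurableSet ({q : (E × ℝ) × E | q.2 ∈ F} ∩ {q : (E × ℝ) × E |
      dist q.2 q.1.1 < min (δ * q.1.2) (β * mCut q.1.1)}) := by
    refine (hF.preimage measurable_snd).inter ?_
    exact (isOpen_lt (continuous_snd.dist (continuous_fst.comp continuous_fst))
      ((continuous_const.mul (continuous_snd.comp continuous_fst)).min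
        (continuous_const.mul (continuous_mCut.comp (continuous_fst.comp continuous_fst))))).measurableSet
  have h := measurable_measure_prodMk_left (ν := gaussM n) hS
  have heq : ∀ p : E × ℝ, (Prod.mk p ⁻¹' ({q : (E × ℝ) × E | q.2 ∈ F} ∩ {q : (E × ℝ) × E |
      dist q.2 q.1.1 < min (δ * q.1.2) (β * mCut q.1.1)}))
      = F ∩ ball p.1 (min (δ * p.2) (β * mCut p.1)) := by
    intro p; rfl
  simp only [heq] at h
  exact h

end Main

theorem stmt14 {n : ℕ} (α β δ : ℝ) (hα : 0 < α) (hβ : 0 < β) (hδ : 0 < δ) (hδα : δ < α) :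
    ∃ η₀ : ℝ, 0 < η₀ ∧ η₀ < 1 ∧ ∀ η : ℝ, η₀ ≤ η → η < 1 →
      ∃ C : ℝ, 0 < C ∧
      ∀ F : Set (EuclideanSpace ℝ (Fin n)), MeasurableSet F →
      ∀ H : EuclideanSpace ℝ (Fin n) × ℝ → ℝ≥0∞, Measurable H →
        (∫⁻ p in ⋃ x ∈ {x : EuclideanSpace ℝ (Fin n) |
              ∀ c : EuclideanSpace ℝ (Fin n), ∀ r : ℝ, 0 < r → r ≤ β * mCut c →
              x ∈ Metric.ball c r →
              ENNReal.ofReal η * gaussM n (Metric.ball c r)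
                ≤ gaussM n (Metric.ball c r ∩ F)},
            gaussCone α β x, H p ∂ tentMeasure n)
          ≤ ENNReal.ofReal C *
            ∫⁻ x in F, (∫⁻ p in gaussCone δ β x,
                H p / gaussM n (Metric.ball p.1 (min (δ * p.2) (β * mCut p.1)))
                ∂ tentMeasure n) ∂ gaussM n := by
  classical
  have hK1 : 1 ≤ Kc n α β δ := one_le_Kc hβ hδ hδα
  have hK0 : 0 < Kc n α β δ := by linarith
  have hhalfK : 1 / (2 * Kc n α β δ) ≤ 1 / 2 := by
    apply one_div_le_one_div_of_le <;> linarith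
  have hposK : 0 < 1 / (2 * Kc n α β δ) := by positivity
  refine ⟨1 - 1 / (2 * Kc n α β δ), by linarith, by linarith, ?_⟩
  intro η hη' hη1
  refine ⟨2, by norm_num, ?_⟩
  intro F hF H hH
  have hgm : Measurable fun p : EuclideanSpace ℝ (Fin n) × ℝ =>
      H p / gaussM n (ball p.1 (min (δ * p.2) (β * mCut p.1))) :=
    hH.div (measurable_gaussM_ball δ β)
  have hWm : MeasurableSet {q : EuclideanSpace ℝ (Fin n) ×
      (EuclideanSpace ℝ (Fin n) × ℝ) | q.2 ∈ gaussCone δ β q.1} :=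
    (isOpen_coneProd δ β).measurableSet
  -- inner rewrite
  have hinner : ∀ x : EuclideanSpace ℝ (Fin n),
      (∫⁻ p in gaussCone δ β x,
          H p / gaussM n (ball p.1 (min (δ * p.2) (β * mCut p.1))) ∂tentMeasure n)
      = ∫⁻ p, Set.indicator {q : EuclideanSpace ℝ (Fin n) ×
          (EuclideanSpace ℝ (Fin n) × ℝ) | q.2 ∈ gaussCone δ β q.1}
          (fun q => H q.2 / gaussM n (ball q.2.1 (min (δ * q.2.2) (β * mCut q.2.1)))) (x, p)
          ∂tentMeasure n := by
    intro x
    rw [← lintegral_indicator (isOpen_gaussCone δ β x).measurableSet]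
    all_goals
      refine lintegral_congr fun p => ?_
      by_cases hp : p ∈ gaussCone δ β x
      · rw [Set.indicator_of_mem hp, Set.indicator_of_mem (by exact hp)]
      · rw [Set.indicator_of_notMem hp, Set.indicator_of_notMem (by exact hp)]
  -- Tonelli
  have hswap : (∫⁻ x in F, ∫⁻ p, Set.indicator {q : EuclideanSpace ℝ (Fin n) ×
          (EuclideanSpace ℝ (Fin n) × ℝ) | q.2 ∈ gaussCone δ β q.1}
          (fun q => H q.2 / gaussM n (ball q.2.1 (min (δ * q.2.2) (β * mCut q.2.1)))) (x, p)
          ∂tentMeasure n ∂gaussM n)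
      = ∫⁻ p, ∫⁻ x, Set.indicator {q : EuclideanSpace ℝ (Fin n) ×
          (EuclideanSpace ℝ (Fin n) × ℝ) | q.2 ∈ gaussCone δ β q.1}
          (fun q => H q.2 / gaussM n (ball q.2.1 (min (δ * q.2.2) (β * mCut q.2.1)))) (x, p)
          ∂((gaussM n).restrict F) ∂tentMeasure n := by
    exact lintegral_lintegral_swap
      (((hgm.comp measurable_snd).indicator hWm).aemeasurable)
  -- compute inner integral over x
  have hcompute : ∀ p : EuclideanSpace ℝ (Fin n) × ℝ,
      (∫⁻ x, Set.indicator {q : EuclideanSpace ℝ (Fin n) ×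
          (EuclideanSpace ℝ (Fin n) × ℝ) | q.2 ∈ gaussCone δ β q.1}
          (fun q => H q.2 / gaussM n (ball q.2.1 (min (δ * q.2.2) (β * mCut q.2.1)))) (x, p)
          ∂((gaussM n).restrict F))
      = if 0 < p.2 then (H p / gaussM n (ball p.1 (min (δ * p.2) (β * mCut p.1))))
          * gaussM n (F ∩ ball p.1 (min (δ * p.2) (β * mCut p.1))) else 0 := by
    intro p
    by_cases ht : 0 < p.2
    · rw [if_pos ht]
      have heq : ∀ x : EuclideanSpace ℝ (Fin n),
          Set.indicator {q : EuclideanSpace ℝ (Fin n) ×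
            (EuclideanSpace ℝ (Fin n) × ℝ) | q.2 ∈ gaussCone δ β q.1}
            (fun q => H q.2 / gaussM n (ball q.2.1 (min (δ * q.2.2) (β * mCut q.2.1)))) (x, p)
          = (ball p.1 (min (δ * p.2) (β * mCut p.1))).indicator
              (fun _ => H p / gaussM n (ball p.1 (min (δ * p.2) (β * mCut p.1)))) x := by
        intro x
        have hmem : (x, p) ∈ {q : EuclideanSpace ℝ (Fin n) ×
            (EuclideanSpace ℝ (Fin n) × ℝ) | q.2 ∈ gaussCone δ β q.1}
            ↔ x ∈ ball p.1 (min (δ * p.2) (β * mCut p.1)) := by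
          simp only [mem_setOf_eq, gaussCone, mem_ball]
          rw [dist_comm]
          exact ⟨fun h => h.2, fun h => ⟨ht, h⟩⟩
        by_cases hx : (x, p) ∈ {q : EuclideanSpace ℝ (Fin n) ×
            (EuclideanSpace ℝ (Fin n) × ℝ) | q.2 ∈ gaussCone δ β q.1}
        · rw [Set.indicator_of_mem hx, Set.indicator_of_mem (hmem.mp hx)]
        · rw [Set.indicator_of_notMem hx,
            Set.indicator_of_notMem (fun hc => hx (hmem.mpr hc))]
      simp_rw [heq]
      rw [lintegral_indicator measurableSet_ball, setLIntegral_const,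
        Measure.restrict_apply measurableSet_ball, inter_comm]
    · rw [if_neg ht]
      have heq : ∀ x : EuclideanSpace ℝ (Fin n),
          Set.indicator {q : EuclideanSpace ℝ (Fin n) ×
            (EuclideanSpace ℝ (Fin n) × ℝ) | q.2 ∈ gaussCone δ β q.1}
            (fun q => H q.2 / gaussM n (ball q.2.1 (min (δ * q.2.2) (β * mCut q.2.1)))) (x, p)
          = 0 := by
        intro x
        exact Set.indicator_of_notMem (fun hc => ht hc.1) _
      simp [heq]
  -- pointwise bound
  have hRopen : IsOpen (⋃ x ∈ {x : EuclideanSpace ℝ (Fin n) |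
      ∀ c : EuclideanSpace ℝ (Fin n), ∀ r : ℝ, 0 < r → r ≤ β * mCut c →
      x ∈ Metric.ball c r →
      ENNReal.ofReal η * gaussM n (Metric.ball c r)
        ≤ gaussM n (Metric.ball c r ∩ F)}, gaussCone α β x) :=
    isOpen_biUnion fun x _ => isOpen_gaussCone α β x
  have hpt : ∀ p : EuclideanSpace ℝ (Fin n) × ℝ,
      Set.indicator (⋃ x ∈ {x : EuclideanSpace ℝ (Fin n) |
        ∀ c : EuclideanSpace ℝ (Fin n), ∀ r : ℝ, 0 < r → r ≤ β * mCut c →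
        x ∈ Metric.ball c r →
        ENNReal.ofReal η * gaussM n (Metric.ball c r)
          ≤ gaussM n (Metric.ball c r ∩ F)}, gaussCone α β x) H p
      ≤ 2 * (if 0 < p.2 then (H p / gaussM n (ball p.1 (min (δ * p.2) (β * mCut p.1))))
          * gaussM n (F ∩ ball p.1 (min (δ * p.2) (β * mCut p.1))) else 0) := by
    intro p
    by_cases hp : p ∈ (⋃ x ∈ {x : EuclideanSpace ℝ (Fin n) |
        ∀ c : EuclideanSpace ℝ (Fin n), ∀ r : ℝ, 0 < r → r ≤ β * mCut c →
        x ∈ Metric.ball c r →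
        ENNReal.ofReal η * gaussM n (Metric.ball c r)
          ≤ gaussM n (Metric.ball c r ∩ F)}, gaussCone α β x)
    · rw [Set.indicator_of_mem hp]
      obtain ⟨x, hxF, hpc⟩ := mem_iUnion₂.mp hp
      obtain ⟨ht, hd⟩ := hpc
      rw [if_pos ht]
      have hkey : gaussM n (ball p.1 (min (δ * p.2) (β * mCut p.1)))
          ≤ 2 * gaussM n (F ∩ ball p.1 (min (δ * p.2) (β * mCut p.1))) :=
        key_density hα hβ hδ hδα hη' hη1 ht hxF hd
      have hr0 : 0 < min (δ * p.2) (β * mCut p.1) :=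
        lt_min (by positivity) (mul_pos hβ (mCut_pos p.1))
      have hB0 : gaussM n (ball p.1 (min (δ * p.2) (β * mCut p.1))) ≠ 0 := by
        have hlow := le_gaussM_ball hβ hr0 (min_le_right _ _)
        have hpos : (0:ℝ≥0∞) < ENNReal.ofReal (Real.exp (-‖p.1‖ ^ 2 - (2 * β + 3 * β ^ 2)))
            * volume (ball p.1 (min (δ * p.2) (β * mCut p.1))) :=
          ENNReal.mul_pos (ENNReal.ofReal_pos.mpr (Real.exp_pos _)).ne'
            (measure_ball_pos volume p.1 hr0).ne'
        exact (hpos.trans_le hlow).ne'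
      have hBT : gaussM n (ball p.1 (min (δ * p.2) (β * mCut p.1))) ≠ ∞ :=
        gaussM_ball_ne_top p.1 _
      calc H p = H p / gaussM n (ball p.1 (min (δ * p.2) (β * mCut p.1)))
              * gaussM n (ball p.1 (min (δ * p.2) (β * mCut p.1))) :=
            (ENNReal.div_mul_cancel hB0 hBT).symm
        _ ≤ H p / gaussM n (ball p.1 (min (δ * p.2) (β * mCut p.1)))
              * (2 * gaussM n (F ∩ ball p.1 (min (δ * p.2) (β * mCut p.1)))) :=
            mul_le_mul_right hkey _
        _ = 2 * (H p / gaussM n (ball p.1 (min (δ * p.2) (β * mCut p.1)))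
              * gaussM n (F ∩ ball p.1 (min (δ * p.2) (β * mCut p.1)))) := by ring
    · rw [Set.indicator_of_notMem hp]
      exact zero_le
  -- final chain
  have hR2 : ENNReal.ofReal (2:ℝ) = 2 := by norm_num
  rw [hR2]
  calc (∫⁻ p in (⋃ x ∈ {x : EuclideanSpace ℝ (Fin n) |
        ∀ c : EuclideanSpace ℝ (Fin n), ∀ r : ℝ, 0 < r → r ≤ β * mCut c →
        x ∈ Metric.ball c r →
        ENNReal.ofReal η * gaussM n (Metric.ball c r)
          ≤ gaussM n (Metric.ball c r ∩ F)}, gaussCone α β x), H p ∂tentMeasure n)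
      = ∫⁻ p, Set.indicator (⋃ x ∈ {x : EuclideanSpace ℝ (Fin n) |
        ∀ c : EuclideanSpace ℝ (Fin n), ∀ r : ℝ, 0 < r → r ≤ β * mCut c →
        x ∈ Metric.ball c r →
        ENNReal.ofReal η * gaussM n (Metric.ball c r)
          ≤ gaussM n (Metric.ball c r ∩ F)}, gaussCone α β x) H p ∂tentMeasure n :=
        (lintegral_indicator hRopen.measurableSet H).symm
    _ ≤ ∫⁻ p, 2 * (if 0 < p.2 then (H p / gaussM n (ball p.1 (min (δ * p.2) (β * mCut p.1))))
          * gaussM n (F ∩ ball p.1 (min (δ * p.2) (β * mCut p.1))) else 0) ∂tentMeasure n :=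
        lintegral_mono hpt
    _ = 2 * ∫⁻ p, (if 0 < p.2 then (H p / gaussM n (ball p.1 (min (δ * p.2) (β * mCut p.1))))
          * gaussM n (F ∩ ball p.1 (min (δ * p.2) (β * mCut p.1))) else 0) ∂tentMeasure n :=
        lintegral_const_mul' _ _ (by norm_num)
    _ = 2 * ∫⁻ p, ∫⁻ x, Set.indicator {q : EuclideanSpace ℝ (Fin n) ×
          (EuclideanSpace ℝ (Fin n) × ℝ) | q.2 ∈ gaussCone δ β q.1}
          (fun q => H q.2 / gaussM n (ball q.2.1 (min (δ * q.2.2) (β * mCut q.2.1)))) (x, p)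
          ∂((gaussM n).restrict F) ∂tentMeasure n := by
        congr 1
        exact (lintegral_congr hcompute).symm
    _ = 2 * ∫⁻ x in F, ∫⁻ p, Set.indicator {q : EuclideanSpace ℝ (Fin n) ×
          (EuclideanSpace ℝ (Fin n) × ℝ) | q.2 ∈ gaussCone δ β q.1}
          (fun q => H q.2 / gaussM n (ball q.2.1 (min (δ * q.2.2) (β * mCut q.2.1)))) (x, p)
          ∂tentMeasure n ∂gaussM n := by rw [hswap]
    _ = 2 * ∫⁻ x in F, ∫⁻ p in gaussCone δ β x,
          H p / gaussM n (ball p.1 (min (δ * p.2) (β * mCut p.1))) ∂tentMeasure n ∂gaussM n := by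
        congr 1
        exact lintegral_congr fun x => (hinner x).symm
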